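/- arXiv:1810.12408 — 4 statements merged into one kernel-verified Lean document; each statement's English description precedes it below -/
import Mathlib

section
/- Let x be a nilpotent endomorphism of a finite-dimensional vector space V, let ℓ ≥ 1, and let M ⊆ im x^ℓ be an x-stable subspace. Then for every k with 1 ≤ k ≤ ℓ, the map induced by x gives a linear isomorphism from (x^k)^{-1}(M)/ker x^k onto (x^{k-1})^{-1}(M)/ker x^{k-1}; consequently dim((x^k)^{-1}(M)/(x^{k-1})^{-1}(M)) = dim(ker x^k/ker x^{k-1}). -/
/-!
Rank–nullity for `x ^ k` restricted to `(x ^ k)⁻¹(M)` gives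
`dim (x ^ k)⁻¹(M) = dim M + dim ker x ^ k` as soon as `M ⊆ im x ^ k`, which holds for `k ≤ ℓ`;
subtracting the same identity for `k - 1` yields the dimension count. Surjectivity of the induced
map: if `x ^ (k-1) v = x ^ k z ∈ M`, then `v = (v - x z) + x z` with `v - x z ∈ ker x ^ (k-1)`
and `z ∈ (x ^ k)⁻¹(M)`.
-/

open Module

theorem LinearMap.finrank_comap_of_le_range {K V W : Type*} [DivisionRing K] [AddCommGroup V]
    [Module K V] [AddCommGroup W] [Module K W] [FiniteDimensional K V]
    (f : V →ₗ[K] W) {N : Submodule K W} (hN : N ≤ range f) :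
    finrank K (N.comap f) = finrank K N + finrank K (ker f) := by
  have hrange : range (f.domRestrict (N.comap f)) = N := by
    rw [range_domRestrict, Submodule.map_comap_eq_of_le hN]
  have hker : finrank K (ker (f.domRestrict (N.comap f))) = finrank K (ker f) := by
    rw [ker_domRestrict]
    exact (Submodule.comapSubtypeEquivOfLe (ker_le_comap f)).finrank_eq
  rw [← (f.domRestrict _).finrank_range_add_finrank_ker, hrange, hker]

namespace Module.End

theorem range_pow_le_range_pow {R M : Type*} [Semiring R] [AddCommMonoid M] [Module R M]
    (f : End R M) {m n : ℕ} (h : m ≤ n) :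
    LinearMap.range (f ^ n) ≤ LinearMap.range (f ^ m) := by
  rw [← Nat.add_sub_cancel' h, pow_add]
  exact LinearMap.range_comp_le_range _ _

theorem comap_pow_le_ker_sup_map_comap_pow_succ {R M : Type*} [Ring R] [AddCommGroup M]
    [Module R M] (f : End R M) {N : Submodule R M} {n : ℕ}
    (hN : N ≤ LinearMap.range (f ^ (n + 1))) :
    N.comap (f ^ n) ≤ LinearMap.ker (f ^ n) ⊔ (N.comap (f ^ (n + 1))).map f := by
  intro v hv
  obtain ⟨z, hz⟩ := hN hv
  have hz' : (f ^ n) (f z) = (f ^ n) v := by rwa [pow_succ, mul_apply] at hz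
  refine Submodule.mem_sup.mpr ⟨v - f z, ?_, f z, Submodule.mem_map_of_mem ?_, sub_add_cancel v _⟩
  · rw [LinearMap.mem_ker, map_sub, hz', sub_self]
  · rwa [Submodule.mem_comap, hz]

end Module.End

theorem stmt6_general {K V : Type*} [Field K] [AddCommGroup V] [Module K V] [FiniteDimensional K V]
    (x : V →ₗ[K] V) (ℓ : ℕ)
    (M : Submodule K V) (hM : M ≤ LinearMap.range (x ^ ℓ))
    (k : ℕ) (hk1 : 1 ≤ k) (hkℓ : k ≤ ℓ) :
    -- the map induced by `x` is well defined on the subquotients: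
    (∀ v ∈ Submodule.comap (x ^ k) M, x v ∈ Submodule.comap (x ^ (k - 1)) M) ∧
    (∀ v ∈ LinearMap.ker (x ^ k), x v ∈ LinearMap.ker (x ^ (k - 1))) ∧
    -- injectivity of the induced map:
    (∀ v ∈ Submodule.comap (x ^ k) M,
      x v ∈ LinearMap.ker (x ^ (k - 1)) → v ∈ LinearMap.ker (x ^ k)) ∧
    -- surjectivity of the induced map:
    (Submodule.comap (x ^ (k - 1)) M ≤
      LinearMap.ker (x ^ (k - 1)) ⊔ Submodule.map x (Submodule.comap (x ^ k) M)) ∧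
    -- consequence on dimensions:
    (finrank K ↥(Submodule.comap (x ^ k) M) - finrank K ↥(Submodule.comap (x ^ (k - 1)) M)
      = finrank K ↥(LinearMap.ker (x ^ k)) - finrank K ↥(LinearMap.ker (x ^ (k - 1)))) := by
  obtain ⟨n, rfl⟩ : ∃ n, k = n + 1 := ⟨k - 1, by omega⟩
  have hM_le (m : ℕ) (hm : m ≤ ℓ) : M ≤ LinearMap.range (x ^ m) :=
    hM.trans (Module.End.range_pow_le_range_pow x hm)
  have hsucc (v : V) : (x ^ (n + 1)) v = (x ^ n) (x v) := by rw [pow_succ, Module.End.mul_apply]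
  rw [Nat.add_sub_cancel]
  simp only [Submodule.mem_comap, LinearMap.mem_ker, hsucc]
  refine ⟨fun _ h ↦ h, fun _ h ↦ h, fun _ _ h ↦ h, ?_, ?_⟩
  · exact Module.End.comap_pow_le_ker_sup_map_comap_pow_succ x (hM_le _ hkℓ)
  · rw [LinearMap.finrank_comap_of_le_range _ (hM_le _ hkℓ),
      LinearMap.finrank_comap_of_le_range _ (hM_le n (by omega))]
    omega

/-- Let `x` be a nilpotent endomorphism of a finite-dimensional space `V`, `ℓ ≥ 1`, and
`M ⊆ im x^ℓ` an `x`-stable subspace.  For `1 ≤ k ≤ ℓ`, the map induced by `x` gives a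
linear isomorphism `(x^k)⁻¹(M)/ker x^k ≅ (x^{k-1})⁻¹(M)/ker x^{k-1}`: it is well defined,
injective and surjective; consequently
`dim((x^k)⁻¹(M)/(x^{k-1})⁻¹(M)) = dim(ker x^k / ker x^{k-1})`. -/
theorem stmt6 {K V : Type*} [Field K] [AddCommGroup V] [Module K V] [FiniteDimensional K V]
    (x : V →ₗ[K] V) (hnil : IsNilpotent x) (ℓ : ℕ) (hℓ : 1 ≤ ℓ)
    (M : Submodule K V) (hM : M ≤ LinearMap.range (x ^ ℓ)) (hMx : ∀ v ∈ M, x v ∈ M)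
    (k : ℕ) (hk1 : 1 ≤ k) (hkℓ : k ≤ ℓ) :
    -- the map induced by `x` is well defined on the subquotients:
    (∀ v ∈ Submodule.comap (x ^ k) M, x v ∈ Submodule.comap (x ^ (k - 1)) M) ∧
    (∀ v ∈ LinearMap.ker (x ^ k), x v ∈ LinearMap.ker (x ^ (k - 1))) ∧
    -- injectivity of the induced map:
    (∀ v ∈ Submodule.comap (x ^ k) M,
      x v ∈ LinearMap.ker (x ^ (k - 1)) → v ∈ LinearMap.ker (x ^ k)) ∧
    -- surjectivity of the induced map:
    (Submodule.comap (x ^ (k - 1)) M ≤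
      LinearMap.ker (x ^ (k - 1)) ⊔ Submodule.map x (Submodule.comap (x ^ k) M)) ∧
    -- consequence on dimensions:
    (finrank K ↥(Submodule.comap (x ^ k) M) - finrank K ↥(Submodule.comap (x ^ (k - 1)) M)
      = finrank K ↥(LinearMap.ker (x ^ k)) - finrank K ↥(LinearMap.ker (x ^ (k - 1)))) :=
  stmt6_general x ℓ M hM k hk1 hkℓ
end

section
/- Let x be a nilpotent endomorphism of a finite-dimensional vector space V and ℓ ≥ 1. Then for every k ≥ 1, the map x^ℓ induces a linear isomorphism ker x^{ℓ+k}/ker x^ℓ ≅ ker((x restricted to im x^ℓ)^k). In particular, the Jordan type of x restricted to im x^ℓ is the Young diagram obtained from the Jordan type of x by deleting its first ℓ columns. -/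
open Module

/-! Since `x^{ℓ+k} = x^k ∘ x^ℓ`, the space `ker x^{ℓ+k}` is the preimage of `ker x^k` under `x^ℓ`;
restricting `x^ℓ` to it and applying rank–nullity identifies the quotient by `ker x^ℓ` with
`im x^ℓ ⊓ ker x^k`, the kernel of the `k`-th power of `x|_{im x^ℓ}`. -/

theorem LinearMap.finrank_comap_eq_finrank_range_inf_add_finrank_ker {K V W : Type*} [Field K]
    [AddCommGroup V] [Module K V] [FiniteDimensional K V] [AddCommGroup W] [Module K W]
    (f : V →ₗ[K] W) (q : Submodule K W) :
    finrank K (q.comap f) = finrank K ↥(range f ⊓ q) + finrank K (ker f) := by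
  have hker : ker f ≤ q.comap f := fun v hv => by simp [mem_ker.mp hv]
  have := finrank_range_add_finrank_ker (f.domRestrict (q.comap f))
  rwa [range_domRestrict, Submodule.map_comap_eq, ker_domRestrict,
    (Submodule.comapSubtypeEquivOfLe hker).finrank_eq, eq_comm] at this

theorem Module.End.ker_pow_add_eq_comap {R M : Type*} [Semiring R] [AddCommMonoid M]
    [Module R M] (x : Module.End R M) (ℓ k : ℕ) :
    LinearMap.ker (x ^ (ℓ + k)) = (LinearMap.ker (x ^ k)).comap (x ^ ℓ) := by
  rw [add_comm, pow_add, Module.End.mul_eq_comp, LinearMap.ker_comp]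

theorem Module.End.finrank_ker_pow_add {K V : Type*} [Field K] [AddCommGroup V] [Module K V]
    [FiniteDimensional K V] (x : Module.End K V) (ℓ k : ℕ) :
    finrank K (LinearMap.ker (x ^ (ℓ + k)))
      = finrank K ↥(LinearMap.range (x ^ ℓ) ⊓ LinearMap.ker (x ^ k))
        + finrank K (LinearMap.ker (x ^ ℓ)) := by
  rw [ker_pow_add_eq_comap, LinearMap.finrank_comap_eq_finrank_range_inf_add_finrank_ker]

theorem stmt7_general {K V : Type*} [Field K] [AddCommGroup V] [Module K V] [FiniteDimensional K V]
    (x : V →ₗ[K] V) (ℓ : ℕ) :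
    ∀ k : ℕ, 1 ≤ k →
      -- `x^ℓ` maps `ker x^{ℓ+k}` into `ker((x|_{im x^ℓ})^k) = im x^ℓ ⊓ ker x^k` …
      (∀ v ∈ LinearMap.ker (x ^ (ℓ + k)),
        (x ^ ℓ) v ∈ LinearMap.range (x ^ ℓ) ⊓ LinearMap.ker (x ^ k)) ∧
      -- … surjectively, …
      (∀ w ∈ LinearMap.range (x ^ ℓ) ⊓ LinearMap.ker (x ^ k),
        ∃ v ∈ LinearMap.ker (x ^ (ℓ + k)), (x ^ ℓ) v = w) ∧
      -- … with kernel exactly `ker x^ℓ`, …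
      (∀ v ∈ LinearMap.ker (x ^ (ℓ + k)), (x ^ ℓ) v = 0 → v ∈ LinearMap.ker (x ^ ℓ)) ∧
      -- … so that the dimensions match:
      (finrank K ↥(LinearMap.ker (x ^ (ℓ + k))) - finrank K ↥(LinearMap.ker (x ^ ℓ))
        = finrank K ↥(LinearMap.range (x ^ ℓ) ⊓ LinearMap.ker (x ^ k))) ∧
      -- in particular, the columns of the Jordan type of `x|_{im x^ℓ}` are obtained from
      -- those of `x` by deleting the first `ℓ` columns:
      (finrank K ↥(LinearMap.range (x ^ ℓ) ⊓ LinearMap.ker (x ^ k))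
          - finrank K ↥(LinearMap.range (x ^ ℓ) ⊓ LinearMap.ker (x ^ (k - 1)))
        = finrank K ↥(LinearMap.ker (x ^ (ℓ + k)))
          - finrank K ↥(LinearMap.ker (x ^ (ℓ + k - 1)))) := by
  intro k hk
  have hcomap := Module.End.ker_pow_add_eq_comap x ℓ k
  have hdim := Module.End.finrank_ker_pow_add x ℓ k
  have hdim_pred := Module.End.finrank_ker_pow_add x ℓ (k - 1)
  rw [show ℓ + (k - 1) = ℓ + k - 1 by omega] at hdim_pred
  refine ⟨fun v hv => ⟨⟨v, rfl⟩, ?_⟩, ?_, fun v _ hv => hv, by omega, by omega⟩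
  · rwa [hcomap] at hv
  · rintro w ⟨⟨v, rfl⟩, hw⟩
    exact ⟨v, by rwa [hcomap], rfl⟩

/-- Let `x` be a nilpotent endomorphism of a finite-dimensional space `V` and `ℓ ≥ 1`.
For every `k ≥ 1`, the map `x^ℓ` induces a linear isomorphism
`ker x^{ℓ+k}/ker x^ℓ ≅ ker((x|_{im x^ℓ})^k)`, where the kernel of the `k`-th power of the
restriction of `x` to `im x^ℓ` is `im x^ℓ ⊓ ker x^k`.  In particular the column lengths of
the Jordan type of `x|_{im x^ℓ}` are those of `x` with the first `ℓ` columns deleted. -/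
theorem stmt7 {K V : Type*} [Field K] [AddCommGroup V] [Module K V] [FiniteDimensional K V]
    (x : V →ₗ[K] V) (hnil : IsNilpotent x) (ℓ : ℕ) (hℓ : 1 ≤ ℓ) :
    ∀ k : ℕ, 1 ≤ k →
      -- `x^ℓ` maps `ker x^{ℓ+k}` into `ker((x|_{im x^ℓ})^k) = im x^ℓ ⊓ ker x^k` …
      (∀ v ∈ LinearMap.ker (x ^ (ℓ + k)),
        (x ^ ℓ) v ∈ LinearMap.range (x ^ ℓ) ⊓ LinearMap.ker (x ^ k)) ∧
      -- … surjectively, …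
      (∀ w ∈ LinearMap.range (x ^ ℓ) ⊓ LinearMap.ker (x ^ k),
        ∃ v ∈ LinearMap.ker (x ^ (ℓ + k)), (x ^ ℓ) v = w) ∧
      -- … with kernel exactly `ker x^ℓ`, …
      (∀ v ∈ LinearMap.ker (x ^ (ℓ + k)), (x ^ ℓ) v = 0 → v ∈ LinearMap.ker (x ^ ℓ)) ∧
      -- … so that the dimensions match:
      (finrank K ↥(LinearMap.ker (x ^ (ℓ + k))) - finrank K ↥(LinearMap.ker (x ^ ℓ))
        = finrank K ↥(LinearMap.range (x ^ ℓ) ⊓ LinearMap.ker (x ^ k))) ∧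
      -- in particular, the columns of the Jordan type of `x|_{im x^ℓ}` are obtained from
      -- those of `x` by deleting the first `ℓ` columns:
      (finrank K ↥(LinearMap.range (x ^ ℓ) ⊓ LinearMap.ker (x ^ k))
          - finrank K ↥(LinearMap.range (x ^ ℓ) ⊓ LinearMap.ker (x ^ (k - 1)))
        = finrank K ↥(LinearMap.ker (x ^ (ℓ + k)))
          - finrank K ↥(LinearMap.ker (x ^ (ℓ + k - 1)))) :=
  stmt7_general x ℓ
end

section
/- Let V be a 2m-dimensional vector space and x a nilpotent endomorphism with x² = 0. Suppose (V_0,…,V_{2m}) is an x-stable complete flag such that for each i ∈ {0,…,k} the map induced by x on V_{m+i}/V_{m-i} has Jordan type (2^i) (i.e., is a direct sum of i Jordan blocks of size 2, where k = rank x). Then im x ⊆ V_m ⊆ ker x. -/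
/-!
Since `x² = 0`, `x` maps each step `V_p` of the flag into `V_{p-1}`. Dimension counting in the
hypothesis at `i = k` shows that `x(V_{m+k})` is all of `im x` and meets `V_{m-k}` trivially.
The hypothesis at `i` writes every `v ∈ V_m` with `x v ∈ V_{m-i}` as `a + x b` with
`a ∈ V_{m-i}`, so `x v = x a ∈ V_{m-i-1}`; hence `x(V_m) ⊆ V_{m-k} ∩ im x = 0`. Finally
`V_m ⊆ V_{m+k} ∩ ker x`, both of dimension `m`, and `im x` lies in the latter.
-/

open Module Submodule

section

variable {K V : Type*} [Field K] [AddCommGroup V] [Module K V]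

theorem Submodule.finrank_map_add_finrank_inf_ker [FiniteDimensional K V] {V₂ : Type*}
    [AddCommGroup V₂] [Module K V₂] (f : V →ₗ[K] V₂) (W : Submodule K V) :
    finrank K (W.map f) + finrank K ↥(W ⊓ LinearMap.ker f) = finrank K W := by
  have h := LinearMap.finrank_range_add_finrank_ker (f.domRestrict W)
  rw [LinearMap.range_domRestrict, LinearMap.ker_domRestrict] at h
  rw [← h, ← map_comap_subtype,
    (Submodule.equivMapOfInjective _ W.injective_subtype _).finrank_eq]

theorem Submodule.finrank_add_two_mul_finrank_inf_map [FiniteDimensional K V] {x : V →ₗ[K] V}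
    {A B : Submodule K V} (h : A ⊔ B.map x = B ⊓ A.comap x) :
    finrank K B + 2 * finrank K ↥(A ⊓ B.map x) = finrank K A + 2 * finrank K (B.map x) := by
  have hsup := finrank_sup_add_finrank_inf_eq A (B.map x)
  have hW := finrank_map_add_finrank_inf_ker x (B ⊓ A.comap x)
  have hB := finrank_map_add_finrank_inf_ker x B
  rw [← map_inf_eq_map_inf_comap, inf_assoc, inf_eq_right.2 (LinearMap.ker_le_comap x), inf_comm]
    at hW
  rw [h] at hsup
  omega

theorem Submodule.map_le_of_finrank_eq_add_one [FiniteDimensional K V] {x : V →ₗ[K] V}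
    (hx : LinearMap.range x ≤ LinearMap.ker x) {U W : Submodule K V} (hUW : U ≤ W)
    (hU : U.map x ≤ U) (hW : W.map x ≤ W) (hdim : finrank K W = finrank K U + 1) :
    W.map x ≤ U := by
  rintro _ ⟨v, hv, rfl⟩
  by_contra hxv
  have hspan : U ⊔ span K {x v} = W :=
    eq_of_le_of_finrank_eq (sup_le hUW ((span_singleton_le_iff_mem _ _).2 (hW ⟨v, hv, rfl⟩)))
      (by rw [finrank_sup_span_singleton hxv, hdim])
  rw [← hspan] at hv
  obtain ⟨a, ha, _, hb, hab⟩ := mem_sup.1 hv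
  obtain ⟨c, rfl⟩ := mem_span_singleton.1 hb
  have hxxv : x (x v) = 0 := hx ⟨v, rfl⟩
  have hxa : x a = x v := by rw [← hab, map_add, map_smul, hxxv, smul_zero, add_zero]
  exact hxv (hxa ▸ hU ⟨a, ha, rfl⟩)

theorem Submodule.map_le_map_of_sup_map_eq_inf_comap {x : V →ₗ[K] V}
    (hx : LinearMap.range x ≤ LinearMap.ker x) {A B C : Submodule K V}
    (h : A ⊔ B.map x = B ⊓ A.comap x) (hCB : C ≤ B) (hCA : C.map x ≤ A) :
    C.map x ≤ A.map x := by
  rintro _ ⟨v, hv, rfl⟩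
  have hv' : v ∈ A ⊔ B.map x := h ▸ ⟨hCB hv, hCA ⟨v, hv, rfl⟩⟩
  obtain ⟨a, ha, _, ⟨b, -, rfl⟩, rfl⟩ := mem_sup.1 hv'
  have hxxb : x (x b) = 0 := hx ⟨b, rfl⟩
  exact ⟨a, ha, by rw [map_add, hxxb, add_zero]⟩

theorem Submodule.map_flag_le_of_sup_map_eq_inf_comap [FiniteDimensional K V] {x : V →ₗ[K] V}
    (hx : LinearMap.range x ≤ LinearMap.ker x) {F : ℕ → Submodule K V}
    (hmono : Monotone F) {m n : ℕ} (hdim : ∀ i ≤ m, finrank K (F i) = i)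
    (hstab : ∀ i, (F i).map x ≤ F i) (hn : n ≤ m)
    (h : ∀ i < n, F (m - i) ⊔ (F (m + i)).map x = F (m + i) ⊓ (F (m - i)).comap x) :
    (F m).map x ≤ F (m - n) := by
  induction n with
  | zero => simpa using hstab m
  | succ n ih =>
    calc (F m).map x ≤ (F (m - n)).map x :=
          map_le_map_of_sup_map_eq_inf_comap hx (h n n.lt_succ_self) (hmono (by omega))
            (ih (by omega) fun i hi ↦ h i (by omega))
      _ ≤ F (m - (n + 1)) :=
          map_le_of_finrank_eq_add_one hx (hmono (by omega)) (hstab _) (hstab _)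
            (by rw [hdim _ (by omega), hdim _ (by omega)]; omega)

end

/-- Let `V` be `2m`-dimensional, `x` nilpotent with `x² = 0` and `rank x = k`, and let
`(V_0 ⊂ … ⊂ V_{2m})` be an `x`-stable complete flag such that for each `i ≤ k` the
endomorphism induced by `x` on `V_{m+i}/V_{m-i}` has Jordan type `(2^i)`, equivalently its
kernel equals its image (expressed upstairs: `V_{m-i} ⊔ x(V_{m+i}) = V_{m+i} ⊓ x⁻¹(V_{m-i})`).
Then `im x ⊆ V_m ⊆ ker x`. -/
theorem stmt11 {K V : Type*} [Field K] [AddCommGroup V] [Module K V] [FiniteDimensional K V]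
    (m k : ℕ) (hdimV : finrank K V = 2 * m)
    (x : V →ₗ[K] V) (hx2 : x ^ 2 = 0) (hrank : finrank K ↥(LinearMap.range x) = k)
    (F : ℕ → Submodule K V) (hmono : Monotone F)
    (hdim : ∀ i ≤ 2 * m, finrank K ↥(F i) = i)
    (hstab : ∀ i, Submodule.map x (F i) ≤ F i)
    (hjordan : ∀ i ≤ k,
      F (m - i) ⊔ Submodule.map x (F (m + i)) = F (m + i) ⊓ Submodule.comap x (F (m - i))) :
    LinearMap.range x ≤ F m ∧ F m ≤ LinearMap.ker x := by
  have hsq : LinearMap.range x ≤ LinearMap.ker x :=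
    LinearMap.range_le_ker_iff.2 (by rwa [sq, Module.End.mul_eq_comp] at hx2)
  have hkm : k ≤ m := by
    have := LinearMap.finrank_range_add_finrank_ker x
    have := finrank_mono hsq
    omega
  have hcount := finrank_add_two_mul_finrank_inf_map (hjordan k le_rfl)
  have hXk : finrank K (map x (F (m + k))) ≤ k := hrank ▸ finrank_mono LinearMap.map_le_range
  rw [hdim (m - k) (by omega), hdim (m + k) (by omega)] at hcount
  have hdisj : F (m - k) ⊓ map x (F (m + k)) = ⊥ := finrank_eq_zero.1 (by omega)
  have hX : map x (F (m + k)) = LinearMap.range x :=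
    eq_of_le_of_finrank_le LinearMap.map_le_range (by omega)
  have hker : F m ≤ LinearMap.ker x := by
    rw [LinearMap.le_ker_iff_map, eq_bot_iff, ← hdisj]
    exact le_inf (map_flag_le_of_sup_map_eq_inf_comap hsq hmono (fun i hi ↦ hdim i (by omega))
      hstab hkm fun i hi ↦ hjordan i hi.le) (map_mono (hmono (by omega)))
  have hFm : F m = F (m + k) ⊓ LinearMap.ker x := by
    refine eq_of_le_of_finrank_le (le_inf (hmono (by omega)) hker) ?_
    have := finrank_map_add_finrank_inf_ker x (F (m + k))
    rw [hX, hrank, hdim _ (by omega)] at this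
    rw [hdim m (by omega)]
    omega
  refine ⟨?_, hker⟩
  rw [hFm, ← hX]
  exact le_inf (hstab _) (hX ▸ hsq)
end

section
/- (Concatenation preserves admissibility, orthogonal case.) Let d₁ and d₂ be standard domino tableaux such that the concatenation d = d₁ + d₂ is defined (the last column of d₁ is at least as long as the first column of d₂). Suppose d₂ satisfies condition (S) (for every i and every odd ℓ, the subtableau of d₂ formed by boxes numbered ≤ i has an even number of rows of length ℓ), d₁ satisfies condition (O) (for every i and every even ℓ, the subtableau of d₁ formed by boxes numbered ≤ i has an even number of rows of length ℓ), and d₁ has an odd number of columns. Then d satisfies (O). -/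
/-- A standard domino tableau, encoded by its chain of subdiagrams:
`shape i r` is the length of row `r` (rows indexed from `0`) of the Young diagram formed
by the boxes with entry `≤ i`.  Equivalently: the boxes are numbered `0, 1, …, steps`,
the box `0` occurs at most once (only when the total size is odd), each `i ≥ 1` occupies
two adjacent boxes (a horizontal or vertical domino), and the entries are nondecreasing
along rows and columns. -/
structure DominoTableau where
  /-- the largest entry, `⌊n/2⌋` for a tableau with `n` boxes -/
  steps : ℕ
  /-- `shape i r` = length of row `r` of the subtableau formed by the boxes numbered `≤ i` -/
  shape : ℕ → ℕ → ℕ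
  /-- every subshape is a Young diagram: row lengths are weakly decreasing -/
  shape_antitone : ∀ i, Antitone (shape i)
  /-- the subshape of entries `≤ 0` consists of at most one box (the box numbered `0`) … -/
  shape_zero_le : shape 0 0 ≤ 1
  /-- … located in the first row -/
  shape_zero : ∀ r, 1 ≤ r → shape 0 r = 0
  /-- the chain of subshapes is stationary after the last entry -/
  shape_stable : ∀ i, steps ≤ i → shape i = shape steps
  /-- at each step a domino (horizontal or vertical) is added -/
  domino : ∀ i < steps,
    (∃ r, shape (i + 1) r = shape i r + 2 ∧ ∀ r', r' ≠ r → shape (i + 1) r' = shape i r') ∨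
    (∃ r, shape (i + 1) r = shape i r + 1 ∧ shape (i + 1) (r + 1) = shape i (r + 1) + 1 ∧
      shape (i + 1) r = shape (i + 1) (r + 1) ∧
      ∀ r', r' ≠ r → r' ≠ r + 1 → shape (i + 1) r' = shape i r')

/-- `d.nrows i ℓ` is the number of rows of length `ℓ` in the subtableau of `d` formed by
the boxes numbered `≤ i`. -/
noncomputable def DominoTableau.nrows (d : DominoTableau) (i ℓ : ℕ) : ℕ :=
  Nat.card {r : ℕ // d.shape i r = ℓ}

/-- The number of columns of a domino tableau (= the length of its first row). -/
def DominoTableau.cols (d : DominoTableau) : ℕ :=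
  d.shape d.steps 0

/-- Condition (O): for every `i` and every even length `ℓ`, the subtableau formed by the
boxes numbered `≤ i` has an even number of rows of length `ℓ`. -/
def DominoTableau.CondO (d : DominoTableau) : Prop :=
  ∀ i ℓ, 0 < ℓ → Even ℓ → Even (d.nrows i ℓ)

/-- Condition (S): for every `i` and every odd length `ℓ`, the subtableau formed by the
boxes numbered `≤ i` has an even number of rows of length `ℓ`. -/
def DominoTableau.CondS (d : DominoTableau) : Prop :=
  ∀ i ℓ, Odd ℓ → Even (d.nrows i ℓ)

/-- `d.IsConcat d₁ d₂` says that `d` is the concatenation `d₁ + d₂`: `d₂` has even size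
(no box numbered `0`), the last column of `d₁` is at least as long as the first column of
`d₂` (so that the concatenation is defined), and `d` is obtained by placing `d₂` to the
right of `d₁` with all entries of `d₂` shifted by `⌊n₁/2⌋ = d₁.steps`. -/
def DominoTableau.IsConcat (d d₁ d₂ : DominoTableau) : Prop :=
  (∀ r, d₂.shape 0 r = 0) ∧
  Nat.card {r : ℕ // 1 ≤ d₂.shape d₂.steps r} ≤
    Nat.card {r : ℕ // d₁.shape d₁.steps r = d₁.cols} ∧
  d.steps = d₁.steps + d₂.steps ∧
  (∀ i r, d.shape i r = d₁.shape i r + d₂.shape (i - d₁.steps) r)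

/-!
Write `s = d₁.steps` and `c = d₁.cols`. Row `r` of `d` at stage `i` has length
`d₁.shape i r + d₂.shape (i - s) r`, and the cardinality condition in `IsConcat` forces the
rows occupied by `d₂` to be full rows of `d₁`, of length `c`. Hence a row of `d` of length
`ℓ < c` is a row of `d₁` of length `ℓ`, while a row of length `ℓ > c` is a row of `d₂` of
length `ℓ - c`. An even `ℓ` differs from the odd `c`; if `ℓ < c`, (O) for `d₁` applies,
and if `ℓ > c`, then `ℓ - c` is odd and (S) for `d₂` applies.
-/

lemma Set.subset_of_ncard_le_of_isLowerSet {α : Type*} [LinearOrder α] {s t : Set α}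
    (hs : IsLowerSet s) (ht : IsLowerSet t) (hfin : s.Finite) (hcard : s.ncard ≤ t.ncard) :
    s ⊆ t := by
  rcases hs.total ht with hst | hts
  · exact hst
  · by_contra hst
    exact (Set.ncard_lt_ncard (ssubset_of_subset_not_subset hts hst) hfin).not_ge hcard

namespace DominoTableau

variable (d : DominoTableau)

lemma shape_monotone (r : ℕ) : Monotone fun i => d.shape i r := by
  refine monotone_nat_of_le_succ fun i => ?_
  rcases lt_or_ge i d.steps with hi | hi
  · rcases d.domino i hi with ⟨r₀, hr₀, hrest⟩ | ⟨r₀, hr₀, hr₀', -, hrest⟩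
    · by_cases hr : r = r₀
      · subst hr; omega
      · exact (hrest r hr).ge
    · by_cases hr : r = r₀
      · subst hr; omega
      · by_cases hr' : r = r₀ + 1
        · subst hr'; omega
        · exact (hrest r hr hr').ge
  · show d.shape i r ≤ d.shape (i + 1) r
    rw [d.shape_stable i hi, d.shape_stable (i + 1) (by omega)]

lemma shape_le_shape_steps (i r : ℕ) : d.shape i r ≤ d.shape d.steps r := by
  rcases le_total i d.steps with h | h
  · exact d.shape_monotone r h
  · rw [d.shape_stable i h]

lemma shape_le_cols (i r : ℕ) : d.shape i r ≤ d.cols :=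
  (d.shape_le_shape_steps i r).trans (d.shape_antitone d.steps (Nat.zero_le r))

lemma exists_shape_eq_zero_of_ge (i : ℕ) : ∃ N, ∀ r, N ≤ r → d.shape i r = 0 := by
  induction i with
  | zero => exact ⟨1, d.shape_zero⟩
  | succ i ih =>
    obtain ⟨N, hN⟩ := ih
    rcases lt_or_ge i d.steps with hi | hi
    · rcases d.domino i hi with ⟨r₀, -, hrest⟩ | ⟨r₀, -, -, -, hrest⟩
      · exact ⟨max N (r₀ + 1), fun r hr => by rw [hrest r (by omega)]; exact hN r (by omega)⟩
      · exact ⟨max N (r₀ + 2), fun r hr => by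
          rw [hrest r (by omega) (by omega)]; exact hN r (by omega)⟩
    · refine ⟨N, fun r hr => ?_⟩
      rw [d.shape_stable (i + 1) (by omega), ← d.shape_stable i hi]
      exact hN r hr

lemma finite_setOf_shape_pos (i : ℕ) : {r | 0 < d.shape i r}.Finite := by
  obtain ⟨N, hN⟩ := d.exists_shape_eq_zero_of_ge i
  refine (Set.finite_lt_nat N).subset fun r hr => ?_
  by_contra hNr
  exact (hN r (not_lt.mp hNr)).not_gt hr

lemma isLowerSet_setOf_shape_pos (i : ℕ) : IsLowerSet {r | 0 < d.shape i r} :=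
  fun _ _ hle hr => lt_of_lt_of_le hr (d.shape_antitone i hle)

lemma isLowerSet_setOf_shape_eq_cols : IsLowerSet {r | d.shape d.steps r = d.cols} :=
  fun _ _ hle hr => le_antisymm (d.shape_le_cols _ _) (hr ▸ d.shape_antitone d.steps hle)

variable {d} {d₁ d₂ : DominoTableau}

lemma IsConcat.shape_fst_eq_cols (h : d.IsConcat d₁ d₂) {i r : ℕ}
    (hr : 0 < d₂.shape (i - d₁.steps) r) : d₁.shape i r = d₁.cols := by
  obtain ⟨hzero, hcard, -, -⟩ := h
  have hi : d₁.steps ≤ i := by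
    by_contra hi
    rw [Nat.sub_eq_zero_of_le (by omega), hzero r] at hr
    exact hr.false
  -- both sets are initial segments of the rows, so comparing their sizes compares them by inclusion
  have hsub : {r | 0 < d₂.shape d₂.steps r} ⊆ {r | d₁.shape d₁.steps r = d₁.cols} :=
    Set.subset_of_ncard_le_of_isLowerSet (d₂.isLowerSet_setOf_shape_pos _)
      d₁.isLowerSet_setOf_shape_eq_cols (d₂.finite_setOf_shape_pos _) <| by
        rw [← Nat.card_coe_set_eq, ← Nat.card_coe_set_eq]
        exact hcard
  rw [d₁.shape_stable i hi]
  exact hsub (lt_of_lt_of_le hr (d₂.shape_le_shape_steps _ r))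

lemma IsConcat.nrows_of_lt_cols (h : d.IsConcat d₁ d₂) {i ℓ : ℕ} (hℓ : ℓ < d₁.cols) :
    d.nrows i ℓ = d₁.nrows i ℓ := by
  refine Nat.card_congr (Equiv.subtypeEquivRight fun r => ?_)
  rw [h.2.2.2 i r]
  rcases Nat.eq_zero_or_pos (d₂.shape (i - d₁.steps) r) with h₂ | h₂
  · omega
  · have := h.shape_fst_eq_cols h₂
    omega

lemma IsConcat.nrows_of_cols_lt (h : d.IsConcat d₁ d₂) {i ℓ : ℕ} (hℓ : d₁.cols < ℓ) :
    d.nrows i ℓ = d₂.nrows (i - d₁.steps) (ℓ - d₁.cols) := by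
  refine Nat.card_congr (Equiv.subtypeEquivRight fun r => ?_)
  rw [h.2.2.2 i r]
  have := d₁.shape_le_cols i r
  rcases Nat.eq_zero_or_pos (d₂.shape (i - d₁.steps) r) with h₂ | h₂
  · omega
  · have := h.shape_fst_eq_cols h₂
    omega

end DominoTableau

/-- Concatenation preserves admissibility, orthogonal case: if `d = d₁ + d₂` with `d₂`
satisfying (S), `d₁` satisfying (O), and `d₁` having an odd number of columns, then `d`
satisfies (O). -/
theorem stmt12 (d d₁ d₂ : DominoTableau) (h : d.IsConcat d₁ d₂)
    (hS : d₂.CondS) (hO : d₁.CondO) (hodd : Odd d₁.cols) : d.CondO := by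
  intro i ℓ hℓ hev
  have hne : ℓ ≠ d₁.cols := fun hc => Nat.not_even_iff_odd.mpr hodd (hc ▸ hev)
  rcases hne.lt_or_gt with hlt | hgt
  · rw [h.nrows_of_lt_cols hlt]
    exact hO i ℓ hℓ hev
  · rw [h.nrows_of_cols_lt hgt]
    exact hS _ _ (Nat.Even.sub_odd hgt.le hev hodd)
end
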